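/- arXiv:2505.23205 — 3 statements merged into one kernel-verified Lean document; each statement's English description precedes it below -/
import Mathlib

section
/- For every natural number x and every strictly sorted duplicate-free list L of natural numbers all of whose elements are ≥ x, the value find_gap x L is not an element of L. -/
def findGap (x : ℕ) : List ℕ → ℕ
  | [] => x
  | h :: t => if h = x then findGap (x + 1) t else x

lemma le_findGap (x : ℕ) (L : List ℕ) : x ≤ findGap x L := by
  induction L generalizing x with
  | nil => exact le_rfl
  | cons h t ih =>
    unfold findGap
    split
    · exact (Nat.le_succ x).trans (ih (x + 1))
    · exact le_rfl

/- If the head is `x`, the search resumes in the tail from `x + 1`, past the head; otherwise the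
head exceeds `x`, and by sortedness so does every later element, so the gap `x` is missing. -/
theorem stmt_1 (x : ℕ) (L : List ℕ) (hsorted : L.Pairwise (· < ·))
    (hge : ∀ y ∈ L, x ≤ y) : findGap x L ∉ L := by
  induction L generalizing x with
  | nil => simp
  | cons h t ih =>
    obtain ⟨h_lt_t, ht⟩ := List.pairwise_cons.mp hsorted
    unfold findGap
    split_ifs with hhx
    · subst hhx
      rw [List.mem_cons, not_or]
      refine ⟨?_, ?_⟩
      · exact (Nat.lt_succ_self h).trans_le (le_findGap (h + 1) t) |>.ne'
      · exact ih (h + 1) ht h_lt_t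
    · rintro (_ | ⟨_, hmem⟩)
      · exact hhx rfl
      · exact ((hge h List.mem_cons_self).trans_lt (h_lt_t x hmem)).false
end

section
/- For all natural numbers x, n and every strictly sorted list L of natural numbers, if x ≤ n < find_gap x L, then n is an element of L. -/
theorem stmt_2_general (x n : ℕ) (L : List ℕ)
    (hx : x ≤ n) (hn : n < findGap x L) : n ∈ L := by
  induction L generalizing x with
  | nil => exact absurd hn hx.not_gt
  | cons h t ih =>
    by_cases hh : h = x
    · subst hh
      rw [findGap, if_pos rfl] at hn
      rcases hx.eq_or_lt with rfl | hlt
      · exact List.mem_cons_self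
      · exact List.mem_cons_of_mem _ (ih _ hlt hn)
    · rw [findGap, if_neg hh] at hn
      exact absurd hn hx.not_gt

theorem stmt_2 (x n : ℕ) (L : List ℕ) (hsorted : L.Pairwise (· < ·))
    (hx : x ≤ n) (hn : n < findGap x L) : n ∈ L :=
  stmt_2_general x n L hx hn
end

section
/- Let M be a numerical semigroup with gaps list G (the strictly sorted list of elements of ℕ \ M) and let n be a natural number. Define apery G n as the list obtained by removing the elements of G from the concatenation of [0, 1, ..., n-1] with the list obtained by adding n to every element of G. Then x is an element of apery G n if and only if x ∈ M and (n ≤ x → x − n ∉ M), where subtraction is truncated subtraction on ℕ. -/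
def apery (G : List ℕ) (n : ℕ) : List ℕ :=
  ((List.range n) ++ G.map (· + n)).filter (fun x => decide (x ∉ G))

theorem mem_apery_iff {G : List ℕ} {n x : ℕ} :
    x ∈ apery G n ↔ x ∉ G ∧ (n ≤ x → x - n ∈ G) := by
  have shifted_gap : x < n ∨ (∃ g ∈ G, g + n = x) ↔ (n ≤ x → x - n ∈ G) := by
    constructor
    · rintro (hlt | ⟨g, hg, rfl⟩) hle
      · omega
      · simpa using hg
    · intro h
      rcases lt_or_ge x n with hlt | hle
      · exact Or.inl hlt
      · exact Or.inr ⟨x - n, h hle, by omega⟩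
  simp only [apery, List.mem_filter, List.mem_append, List.mem_range, List.mem_map,
    decide_eq_true_eq, shifted_gap]
  exact and_comm

theorem stmt_4_general (M : AddSubmonoid ℕ)
    (G : List ℕ)
    (hG : ∀ x : ℕ, x ∈ G ↔ x ∉ M) (n x : ℕ) :
    x ∈ apery G n ↔ (x ∈ M ∧ (n ≤ x → x - n ∉ M)) := by
  simp only [mem_apery_iff, hG, not_not]

theorem stmt_4 (M : AddSubmonoid ℕ) (hfin : Set.Finite ((M : Set ℕ)ᶜ))
    (G : List ℕ) (hsorted : G.Pairwise (· < ·))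
    (hG : ∀ x : ℕ, x ∈ G ↔ x ∉ M) (n x : ℕ) :
    x ∈ apery G n ↔ (x ∈ M ∧ (n ≤ x → x - n ∉ M)) :=
  stmt_4_general M G hG n x
end
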